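/- arXiv:2307.05855 — 4 statements merged into one kernel-verified Lean document; each statement's English description precedes it below -/
import Mathlib

section
/- Let n ≥ 1 and d ≥ 1 be integers and let x_1, …, x_n ∈ ℝ^d. For each index a ∈ {1,…,n}, the sum over i ≠ a of (1 + Σ_{j=1}^d |x_{a,j} − x_{i,j}|)·exp(−‖x_a − x_i‖²/2) is at most u_G(n,d) = (n−1)·((1+√(1+4d))/2)·exp(−(1+2d−√(1+4d))/(4d)). -/
/-- Upper bound `u_G(n,d)` on the sum of the absolute values of the off-diagonal
entries of any of the first `n` rows of the gradient-enhanced Gaussian kernel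
matrix. -/
noncomputable def uG (n d : ℕ) : ℝ :=
  ((n : ℝ) - 1) * ((1 + Real.sqrt (1 + 4 * (d : ℝ))) / 2) *
    Real.exp (-(1 + 2 * (d : ℝ) - Real.sqrt (1 + 4 * (d : ℝ))) / (4 * (d : ℝ)))

lemma key_bound (d : ℕ) (hd : 1 ≤ d) (s t : ℝ) (hs : 0 ≤ s) (hst : s ^ 2 ≤ d * t) :
    (1 + s) * Real.exp (-t / 2) ≤
      ((1 + Real.sqrt (1 + 4 * (d : ℝ))) / 2) *
        Real.exp (-(1 + 2 * (d : ℝ) - Real.sqrt (1 + 4 * (d : ℝ))) / (4 * (d : ℝ))) := by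
  have hd0 : (0 : ℝ) < d := by exact_mod_cast hd
  set r := Real.sqrt (1 + 4 * (d : ℝ)) with hr
  have hr2 : r ^ 2 = 1 + 4 * (d : ℝ) := Real.sq_sqrt (by positivity)
  have hr1 : 1 ≤ r := by nlinarith [Real.sqrt_nonneg (1 + 4 * (d : ℝ))]
  set c : ℝ := (r - 1) / 2 with hc
  have hc0 : 0 ≤ c := by simp [hc]; linarith
  have hcd : c ^ 2 + c = d := by rw [hc]; nlinarith
  -- exponent identity
  have hexp : -(1 + 2 * (d : ℝ) - r) / (4 * (d : ℝ)) = -c ^ 2 / (2 * d) := by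
    rw [hc]; field_simp; ring_nf; nlinarith
  have h1c : (1 + r) / 2 = 1 + c := by rw [hc]; ring
  rw [hexp, h1c]
  -- step 1 : exp(-t/2) ≤ exp(-s²/(2d))
  have step1 : Real.exp (-t / 2) ≤ Real.exp (-s ^ 2 / (2 * d)) := by
    apply Real.exp_le_exp.2
    rw [div_le_div_iff₀ (by linarith) (by positivity)]
    nlinarith
  -- step 2 : (1+s) ≤ (1+c) * exp((s² - c²)/(2d))
  have step2 : (1 + s) ≤ (1 + c) * Real.exp ((s ^ 2 - c ^ 2) / (2 * d)) := by
    have h2 : (1 + s) ≤ (1 + c) * (1 + (s ^ 2 - c ^ 2) / (2 * d)) := by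
      rw [← sub_nonneg]
      have : (1 + c) * (1 + (s ^ 2 - c ^ 2) / (2 * d)) - (1 + s)
          = (1 + c) * (s - c) ^ 2 / (2 * d) := by
        field_simp; nlinarith [sq_nonneg (s - c)]
      rw [this]; positivity
    refine h2.trans ?_
    have := Real.add_one_le_exp ((s ^ 2 - c ^ 2) / (2 * d))
    nlinarith [Real.exp_pos ((s ^ 2 - c ^ 2) / (2 * d))]
  calc (1 + s) * Real.exp (-t / 2)
      ≤ (1 + s) * Real.exp (-s ^ 2 / (2 * d)) := by
        apply mul_le_mul_of_nonneg_left step1 (by linarith)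
    _ ≤ ((1 + c) * Real.exp ((s ^ 2 - c ^ 2) / (2 * d))) * Real.exp (-s ^ 2 / (2 * d)) := by
        apply mul_le_mul_of_nonneg_right step2 (Real.exp_pos _).le
    _ = (1 + c) * Real.exp (-c ^ 2 / (2 * d)) := by
        rw [mul_assoc, ← Real.exp_add]; ring_nf

/-- For points `x_1, …, x_n ∈ ℝ^d` and any row index `a`, the sum over `i ≠ a` of
`(1 + Σ_j |x_{a,j} − x_{i,j}|) · exp(−‖x_a − x_i‖²/2)` is at most `u_G(n,d)`. -/
theorem stmt_1 {n d : ℕ} (hn : 1 ≤ n) (hd : 1 ≤ d)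
    (x : Fin n → EuclideanSpace ℝ (Fin d)) (a : Fin n) :
    ∑ i ∈ Finset.univ.erase a,
      (1 + ∑ j, |x a j - x i j|) * Real.exp (-‖x a - x i‖ ^ 2 / 2) ≤ uG n d := by
  set M : ℝ := ((1 + Real.sqrt (1 + 4 * (d : ℝ))) / 2) *
      Real.exp (-(1 + 2 * (d : ℝ) - Real.sqrt (1 + 4 * (d : ℝ))) / (4 * (d : ℝ))) with hM
  have hterm : ∀ i ∈ Finset.univ.erase a,
      (1 + ∑ j, |x a j - x i j|) * Real.exp (-‖x a - x i‖ ^ 2 / 2) ≤ M := by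
    intro i _
    set s : ℝ := ∑ j, |x a j - x i j| with hsdef
    have hs : 0 ≤ s := Finset.sum_nonneg fun j _ => abs_nonneg _
    have hnorm : ‖x a - x i‖ ^ 2 = ∑ j, (x a j - x i j) ^ 2 := by
      rw [EuclideanSpace.norm_eq, Real.sq_sqrt (by positivity)]
      apply Finset.sum_congr rfl
      intro j _
      simp [Real.norm_eq_abs, sq_abs]
    have hst : s ^ 2 ≤ d * ‖x a - x i‖ ^ 2 := by
      rw [hnorm]
      have hcs := Finset.sum_mul_sq_le_sq_mul_sq Finset.univ
        (fun j => |x a j - x i j|) (fun _ => (1 : ℝ))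
      simp only [mul_one, one_pow, Finset.sum_const, Finset.card_univ,
        Fintype.card_fin, nsmul_eq_mul] at hcs
      calc s ^ 2 ≤ (∑ j, |x a j - x i j| ^ 2) * d := hcs
        _ = d * ∑ j, (x a j - x i j) ^ 2 := by
            rw [mul_comm]; congr 1; exact Finset.sum_congr rfl fun j _ => sq_abs _
    have neg_eq : -‖x a - x i‖ ^ 2 / 2 = -(‖x a - x i‖ ^ 2) / 2 := by ring
    rw [neg_eq]
    exact key_bound d hd s (‖x a - x i‖ ^ 2) hs hst
  have hsum := Finset.sum_le_card_nsmul _ _ M hterm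
  have hcard : (Finset.univ.erase a).card = n - 1 := by
    rw [Finset.card_erase_of_mem (Finset.mem_univ a), Finset.card_univ, Fintype.card_fin]
  rw [hcard] at hsum
  refine hsum.trans_eq ?_
  rw [nsmul_eq_mul, hM, uG]
  have : ((n - 1 : ℕ) : ℝ) = (n : ℝ) - 1 := by
    have : (1 : ℕ) ≤ n := hn
    push_cast [Nat.cast_sub this]
    ring
  rw [this, mul_assoc]
end

section
/- Let d ≥ 1 be an integer. For every w ∈ ℝ^d with all coordinates w_i ≥ 0, one has (1 + Σ_{i=1}^d w_i)·exp(−‖w‖²/2) ≤ ((1+√(1+4d))/2)·exp(−(1+2d−√(1+4d))/(4d)), with equality when w_i = (−1+√(1+4d))/(2d) for every i. -/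
/-- For `d ≥ 1` and every `w ∈ ℝ^d` with nonnegative coordinates,
`(1 + Σ_i w_i) · exp(−‖w‖²/2) ≤ ((1+√(1+4d))/2) · exp(−(1+2d−√(1+4d))/(4d))`,
with equality when every coordinate equals `α* = (−1+√(1+4d))/(2d)`. -/
theorem stmt_2 {d : ℕ} (hd : 1 ≤ d) :
    (∀ w : Fin d → ℝ, (∀ i, 0 ≤ w i) →
      (1 + ∑ i, w i) * Real.exp (-(∑ i, (w i) ^ 2) / 2) ≤
        ((1 + Real.sqrt (1 + 4 * (d : ℝ))) / 2) *
          Real.exp (-(1 + 2 * (d : ℝ) - Real.sqrt (1 + 4 * (d : ℝ))) / (4 * (d : ℝ)))) ∧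
    (1 + ∑ _i : Fin d, (-1 + Real.sqrt (1 + 4 * (d : ℝ))) / (2 * (d : ℝ))) *
        Real.exp (-(∑ _i : Fin d, ((-1 + Real.sqrt (1 + 4 * (d : ℝ))) / (2 * (d : ℝ))) ^ 2) / 2) =
      ((1 + Real.sqrt (1 + 4 * (d : ℝ))) / 2) *
        Real.exp (-(1 + 2 * (d : ℝ) - Real.sqrt (1 + 4 * (d : ℝ))) / (4 * (d : ℝ))) := by
  have hd0 : (0:ℝ) < d := by exact_mod_cast Nat.lt_of_lt_of_le Nat.zero_lt_one hd
  set r : ℝ := Real.sqrt (1 + 4 * (d : ℝ)) with hrdef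
  have hr0 : 0 ≤ r := Real.sqrt_nonneg _
  have hr2 : r ^ 2 = 1 + 4 * (d : ℝ) := Real.sq_sqrt (by positivity)
  have hr1 : 1 ≤ r := by nlinarith
  set t : ℝ := (-1 + r) / 2 with htdef
  have ht : t ^ 2 + t = d := by rw [htdef]; nlinarith
  have ht0 : 0 ≤ t := by rw [htdef]; linarith
  have h1t : 1 + t = (1 + r) / 2 := by rw [htdef]; ring
  have hexp : -(1 + 2 * (d : ℝ) - r) / (4 * (d : ℝ)) = -t ^ 2 / (2 * d) := by
    field_simp
    nlinarith
  -- key single-variable bound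
  have key : ∀ s : ℝ, 0 ≤ s →
      (1 + s) * Real.exp (-s ^ 2 / (2 * d)) ≤ (1 + t) * Real.exp (-t ^ 2 / (2 * d)) := by
    intro s hs
    have he : 1 + (s ^ 2 - t ^ 2) / (2 * d) ≤ Real.exp ((s ^ 2 - t ^ 2) / (2 * d)) := by
      linarith [Real.add_one_le_exp ((s ^ 2 - t ^ 2) / (2 * d))]
    have hsplit : Real.exp (-t ^ 2 / (2 * d)) =
        Real.exp ((s ^ 2 - t ^ 2) / (2 * d)) * Real.exp (-s ^ 2 / (2 * d)) := by
      rw [← Real.exp_add]; ring_nf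
    have hpos := Real.exp_pos (-s ^ 2 / (2 * d))
    have halg : (1 + s) ≤ (1 + t) * (1 + (s ^ 2 - t ^ 2) / (2 * d)) := by
      rw [← sub_nonneg]
      have heq : (1 + t) * (1 + (s ^ 2 - t ^ 2) / (2 * d)) - (1 + s)
          = (1 + t) * (s - t) ^ 2 / (2 * d) := by
        field_simp
        nlinarith [ht]
      rw [heq]; positivity
    calc (1 + s) * Real.exp (-s ^ 2 / (2 * d))
        ≤ ((1 + t) * (1 + (s ^ 2 - t ^ 2) / (2 * d))) * Real.exp (-s ^ 2 / (2 * d)) := by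
          exact mul_le_mul_of_nonneg_right halg (le_of_lt hpos)
      _ ≤ ((1 + t) * Real.exp ((s ^ 2 - t ^ 2) / (2 * d))) * Real.exp (-s ^ 2 / (2 * d)) := by
          have h1t0 : 0 ≤ 1 + t := by linarith
          exact mul_le_mul_of_nonneg_right
            (mul_le_mul_of_nonneg_left he h1t0) (le_of_lt hpos)
      _ = (1 + t) * Real.exp (-t ^ 2 / (2 * d)) := by rw [hsplit]; ring
  constructor
  · intro w hw
    set s := ∑ i, w i with hsdef
    have hs0 : 0 ≤ s := Finset.sum_nonneg fun i _ => hw i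
    have hcs : s ^ 2 ≤ d * ∑ i, (w i) ^ 2 := by
      simpa using sq_sum_le_card_mul_sum_sq (s := Finset.univ) (f := w)
    have hq : s ^ 2 / d ≤ ∑ i, (w i) ^ 2 := by
      rw [div_le_iff₀ hd0]; linarith
    have hmono : Real.exp (-(∑ i, (w i) ^ 2) / 2) ≤ Real.exp (-s ^ 2 / (2 * d)) := by
      apply Real.exp_le_exp.2
      rw [div_le_div_iff₀ (by norm_num) (by positivity)]
      nlinarith
    calc (1 + s) * Real.exp (-(∑ i, (w i) ^ 2) / 2)
        ≤ (1 + s) * Real.exp (-s ^ 2 / (2 * d)) :=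
          mul_le_mul_of_nonneg_left hmono (by linarith)
      _ ≤ (1 + t) * Real.exp (-t ^ 2 / (2 * d)) := key s hs0
      _ = ((1 + r) / 2) * Real.exp (-(1 + 2 * (d : ℝ) - r) / (4 * (d : ℝ))) := by
          rw [h1t, hexp]
  · have hα : (-1 + r) / (2 * (d : ℝ)) = t / d := by rw [htdef]; ring
    have hsum1 : (∑ _i : Fin d, (-1 + r) / (2 * (d : ℝ))) = t := by
      rw [Finset.sum_const, Finset.card_univ, Fintype.card_fin, hα, nsmul_eq_mul]
      field_simp
    have hsum2 : (∑ _i : Fin d, ((-1 + r) / (2 * (d : ℝ))) ^ 2) = t ^ 2 / d := by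
      rw [Finset.sum_const, Finset.card_univ, Fintype.card_fin, hα, nsmul_eq_mul]
      field_simp
    rw [hsum1, hsum2, h1t, hexp]
    congr 1
    ring
end

section
/- Let n ≥ 1 and d ≥ 1 be integers and let x_1, …, x_n ∈ ℝ^d. For every m ∈ {1,…,n} and every p ∈ {1,…,d}, the sum over i ≠ m of (|x_{m,p} − x_{i,p}| + Σ_{j=1}^d |δ_{pj} − (x_{m,p} − x_{i,p})·(x_{m,j} − x_{i,j})|)·exp(−‖x_m − x_i‖²/2) is at most u_G(n,d) = (n−1)·((1+√(1+4d))/2)·exp(−(1+2d−√(1+4d))/(4d)), where δ_{pj} is the Kronecker delta. -/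
/-!
Put `a = x_m - x_i`, `u = |a_p|` and `v² = ∑_{j ≠ p} a_j²`. The `i`-th summand equals
`(u + |1 - u²| + u ∑_{j ≠ p} |a_j|) e^{-(u² + v²)/2}`, and by Cauchy–Schwarz
`∑_{j ≠ p} |a_j| ≤ √d v`. With `c = (1 + √(1 + 4d))/2`, so that `d = c² - c`, the resulting
two-variable function is at most `c e^{-(c-1)/(2c)}`: multiplying by `e^{(u² + v²)/2}`, this
follows from `e^y ≥ 1 + y` when `u ≤ 1` and from `e^y ≥ 1 + y + y²/2` when `u ≥ 1`, where in both
cases a polynomial inequality remains. Summing the `n - 1` summands gives `u_G(n, d)`.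
-/

open Real Finset

section Scalar

variable {c u v w : ℝ}

lemma mul_sub_one_div_two_mul (hc : c ≠ 0) : c * ((c - 1) / (2 * c)) = (c - 1) / 2 := by
  field_simp

lemma add_one_sub_sq_add_mul_le_mul_exp (hc : 8 / 5 ≤ c) (hw : w ^ 2 ≤ (c ^ 2 - c) * v ^ 2) :
    u + (1 - u ^ 2) + u * w ≤ c * exp ((u ^ 2 + v ^ 2) / 2 - (c - 1) / (2 * c)) := by
  have hct := mul_sub_one_div_two_mul (c := c) (by positivity)
  have huw : 2 * u * w ≤ (c - 1) * u ^ 2 + c * v ^ 2 := by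
    have : 2 * (c - 1) * (u * w) ≤ (c - 1) * ((c - 1) * u ^ 2 + c * v ^ 2) := by
      nlinarith [sq_nonneg ((c - 1) * u - w)]
    nlinarith
  calc u + (1 - u ^ 2) + u * w
      ≤ c * (1 + ((u ^ 2 + v ^ 2) / 2 - (c - 1) / (2 * c))) := by
        nlinarith [sq_nonneg (3 * u - 1)]
    _ ≤ _ := by gcongr; linarith [add_one_le_exp ((u ^ 2 + v ^ 2) / 2 - (c - 1) / (2 * c))]

lemma add_sq_sub_one_add_mul_le_mul_exp (hc : 8 / 5 ≤ c) (hw : w ^ 2 ≤ (c ^ 2 - c) * v ^ 2)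
    (hu : 1 ≤ u) (hv : 0 ≤ v) :
    u + (u ^ 2 - 1) + u * w ≤ c * exp ((u ^ 2 + v ^ 2) / 2 - (c - 1) / (2 * c)) := by
  set q := (u ^ 2 + v ^ 2 - 1) / 2
  set y := (u ^ 2 + v ^ 2) / 2 - (c - 1) / (2 * c)
  have hcy : c * y = c * q + 1 / 2 := by
    have := mul_sub_one_div_two_mul (c := c) (by positivity)
    simp only [y, q]
    linear_combination -this
  have hq : 0 ≤ q := by simp only [q]; nlinarith
  have hy : 0 ≤ y := by nlinarith
  have hcy2 : c * q ^ 2 + q ≤ c * y ^ 2 := by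
    have : c * (c * y ^ 2) = (c * q + 1 / 2) ^ 2 := by rw [← hcy]; ring
    nlinarith
  have hwv : w ≤ c * v := (abs_le_of_sq_le_sq' (by nlinarith) (by positivity)).2
  -- the remaining inequality is affine in `c` with nonnegative slope, so `c = 8/5` is the worst case
  have hslope : 0 ≤ (c - 8 / 5) * (1 / 2 + (u - v) ^ 2 / 2 + (u ^ 2 + v ^ 2 - 1) ^ 2 / 8) :=
    mul_nonneg (by linarith) (by positivity)
  have hbase : 0 ≤ 41 / 20 + u ^ 2 / 20 + 21 / 20 * v ^ 2 - u - 8 / 5 * u * v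
      + (u ^ 2 + v ^ 2 - 1) ^ 2 / 5 := by
    nlinarith [sq_nonneg (3 * (u ^ 2 + v ^ 2) - 8), sq_nonneg (u - v - 1), sq_nonneg (2 * u - 3),
      sq_nonneg (3 * u - 2 * v - 2), sq_nonneg (u + v - 2), sq_nonneg (u * v - 1)]
  have hpoly : u + (u ^ 2 - 1) + c * (u * v) ≤ c + (c * q + 1 / 2) + (c * q ^ 2 + q) / 2 := by
    simp only [q]; linarith
  calc u + (u ^ 2 - 1) + u * w
      ≤ u + (u ^ 2 - 1) + c * (u * v) := by nlinarith
    _ ≤ c * (1 + y + y ^ 2 / 2) := by linarith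
    _ ≤ c * exp y := by gcongr; exact quadratic_le_exp_of_nonneg hy

lemma add_abs_one_sub_sq_add_mul_mul_exp_le (hc : 8 / 5 ≤ c) (hw : w ^ 2 ≤ (c ^ 2 - c) * v ^ 2)
    (hu : 0 ≤ u) (hv : 0 ≤ v) :
    (u + |1 - u ^ 2| + u * w) * exp (-(u ^ 2 + v ^ 2) / 2) ≤ c * exp (-((c - 1) / (2 * c))) := by
  have key : u + |1 - u ^ 2| + u * w ≤ c * exp ((u ^ 2 + v ^ 2) / 2 - (c - 1) / (2 * c)) := by
    rcases le_total u 1 with hu1 | hu1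
    · rw [abs_of_nonneg (by nlinarith)]
      exact add_one_sub_sq_add_mul_le_mul_exp hc hw
    · rw [abs_of_nonpos (by nlinarith), neg_sub]
      exact add_sq_sub_one_add_mul_le_mul_exp hc hw hu1 hv
  calc (u + |1 - u ^ 2| + u * w) * exp (-(u ^ 2 + v ^ 2) / 2)
      ≤ c * exp ((u ^ 2 + v ^ 2) / 2 - (c - 1) / (2 * c)) * exp (-(u ^ 2 + v ^ 2) / 2) := by
        gcongr
    _ = c * exp (-((c - 1) / (2 * c))) := by rw [mul_assoc, ← exp_add]; ring_nf

end Scalar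

section Row

variable {ι : Type*} [Fintype ι] [DecidableEq ι]

lemma sum_abs_ite_sub_mul (a : ι → ℝ) (p : ι) :
    ∑ j, |(if p = j then (1 : ℝ) else 0) - a p * a j|
      = |1 - |a p| ^ 2| + |a p| * ∑ j ∈ univ.erase p, |a j| := by
  rw [← add_sum_erase _ _ (mem_univ p), mul_sum, if_pos rfl, sq_abs, sq]
  congr 1
  refine sum_congr rfl fun j hj => ?_
  rw [if_neg (ne_of_mem_erase hj).symm, zero_sub, abs_neg, abs_mul]

lemma sq_sum_erase_abs_le (a : ι → ℝ) (p : ι) :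
    (∑ j ∈ univ.erase p, |a j|) ^ 2 ≤ Fintype.card ι * ∑ j ∈ univ.erase p, a j ^ 2 := by
  calc (∑ j ∈ univ.erase p, |a j|) ^ 2
      ≤ #(univ.erase p) * ∑ j ∈ univ.erase p, |a j| ^ 2 := sq_sum_le_card_mul_sum_sq
    _ ≤ Fintype.card ι * ∑ j ∈ univ.erase p, a j ^ 2 := by
        simp only [sq_abs]
        gcongr
        exact card_erase_le

lemma gaussian_row_term_le {c : ℝ} (hc : 8 / 5 ≤ c) (hι : (Fintype.card ι : ℝ) ≤ c ^ 2 - c)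
    (a : EuclideanSpace ℝ ι) (p : ι) :
    (|a p| + ∑ j, |(if p = j then (1 : ℝ) else 0) - a p * a j|) * exp (-‖a‖ ^ 2 / 2)
      ≤ c * exp (-((c - 1) / (2 * c))) := by
  set v := √(∑ j ∈ univ.erase p, a j ^ 2)
  have hv2 : v ^ 2 = ∑ j ∈ univ.erase p, a j ^ 2 := sq_sqrt (by positivity)
  have hnorm : ‖a‖ ^ 2 = |a p| ^ 2 + v ^ 2 := by
    rw [EuclideanSpace.real_norm_sq_eq, hv2, sq_abs, add_sum_erase _ (fun j => a j ^ 2) (mem_univ p)]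
  have hw : (∑ j ∈ univ.erase p, |a j|) ^ 2 ≤ (c ^ 2 - c) * v ^ 2 := by
    rw [hv2]
    exact (sq_sum_erase_abs_le a p).trans (by gcongr)
  rw [sum_abs_ite_sub_mul, hnorm, ← add_assoc]
  exact add_abs_one_sub_sq_add_mul_mul_exp_le hc hw (abs_nonneg _) (sqrt_nonneg _)

end Row

/-- The positive root of `c ^ 2 - c = d`. -/
noncomputable def quadRoot (d : ℝ) : ℝ := (1 + √(1 + 4 * d)) / 2

lemma quadRoot_sq_sub_self {d : ℝ} (hd : 0 ≤ d) : quadRoot d ^ 2 - quadRoot d = d := by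
  have := sq_sqrt (by linarith : 0 ≤ 1 + 4 * d)
  unfold quadRoot
  linear_combination this / 4

lemma eight_fifths_le_quadRoot {d : ℝ} (hd : 1 ≤ d) : 8 / 5 ≤ quadRoot d := by
  have := sq_sqrt (by linarith : 0 ≤ 1 + 4 * d)
  unfold quadRoot
  nlinarith [sqrt_nonneg (1 + 4 * d)]

lemma uG_eq {n d : ℕ} (hd : 0 < d) :
    uG n d = (n - 1) * (quadRoot d * exp (-((quadRoot d - 1) / (2 * quadRoot d)))) := by
  have hd : (0 : ℝ) < d := Nat.cast_pos.mpr hd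
  have hs := sq_sqrt (by linarith : (0 : ℝ) ≤ 1 + 4 * d)
  have hs0 := sqrt_nonneg (1 + 4 * (d : ℝ))
  rw [uG, mul_assoc, quadRoot, neg_div]
  generalize √(1 + 4 * (d : ℝ)) = s at *
  congr 4
  field_simp
  linear_combination -2 * hs

theorem stmt_3_general {n d : ℕ}
    (x : Fin n → EuclideanSpace ℝ (Fin d)) (m : Fin n) (p : Fin d) :
    ∑ i ∈ Finset.univ.erase m,
      (|x m p - x i p| +
        ∑ j, |(if p = j then (1 : ℝ) else 0) - (x m p - x i p) * (x m j - x i j)|) *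
        Real.exp (-‖x m - x i‖ ^ 2 / 2) ≤ uG n d := by
  have hd : (1 : ℝ) ≤ d := by exact_mod_cast p.pos
  have hcd : (Fintype.card (Fin d) : ℝ) ≤ quadRoot d ^ 2 - quadRoot d := by
    rw [quadRoot_sq_sub_self (by linarith), Fintype.card_fin]
  rw [uG_eq p.pos]
  refine (sum_le_card_nsmul _ _ (quadRoot d * exp (-((quadRoot d - 1) / (2 * quadRoot d))))
    fun i _ => ?_).trans_eq ?_
  · simpa using gaussian_row_term_le (eight_fifths_le_quadRoot hd) hcd (x m - x i) p
  · rw [card_erase_of_mem (mem_univ m), card_univ, Fintype.card_fin, nsmul_eq_mul,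
      Nat.cast_pred m.pos]

/-- For points `x_1, …, x_n ∈ ℝ^d`, every `m ∈ {1,…,n}` and every `p ∈ {1,…,d}`,
the sum over `i ≠ m` of
`(|x_{m,p} − x_{i,p}| + Σ_j |δ_{pj} − (x_{m,p} − x_{i,p})(x_{m,j} − x_{i,j})|) · exp(−‖x_m − x_i‖²/2)`
is at most `u_G(n,d)`. -/
theorem stmt_3 {n d : ℕ} (hn : 1 ≤ n) (hd : 1 ≤ d)
    (x : Fin n → EuclideanSpace ℝ (Fin d)) (m : Fin n) (p : Fin d) :
    ∑ i ∈ Finset.univ.erase m,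
      (|x m p - x i p| +
        ∑ j, |(if p = j then (1 : ℝ) else 0) - (x m p - x i p) * (x m j - x i j)|) *
        Real.exp (-‖x m - x i‖ ^ 2 / 2) ≤ uG n d :=
  stmt_3_general x m p
end

section
/- Let ν ≥ 0 and α ≥ 0 be real numbers and let d ≥ 1 be an integer. Then g₁(ν,α,d) := (ν + 1 + (d−1)·α·ν)·exp(−(ν² + (d−1)·α²)/2) ≤ ((1+√(1+4d))/2)·exp(−(1+2d−√(1+4d))/(4d)). -/
lemma aux_exp34 : Real.exp (3/4) ≤ 17/8 := by
  have h1 : Real.exp (3/4) ^ 4 = Real.exp 3 := by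
    rw [← Real.exp_nat_mul]; norm_num
  have h2 : Real.exp 3 = Real.exp 1 ^ 3 := by
    rw [← Real.exp_nat_mul]; norm_num
  have h3 : Real.exp 1 < 2.7182818286 := Real.exp_one_lt_d9
  have h4 : Real.exp (3/4) ^ 4 < (17/8 : ℝ) ^ 4 := by
    rw [h1, h2]
    calc Real.exp 1 ^ 3 < (2.7182818286 : ℝ) ^ 3 :=
          pow_lt_pow_left₀ h3 (Real.exp_pos 1).le (by norm_num)
      _ < (17/8 : ℝ) ^ 4 := by norm_num
  exact (lt_of_pow_lt_pow_left₀ 4 (by norm_num) h4).le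

lemma aux_exp_sq (y : ℝ) : Real.exp y ^ 2 = Real.exp (2 * y) := by
  rw [sq, ← Real.exp_add]; congr 1; ring

set_option maxHeartbeats 1000000 in
/-- For real `ν ≥ 0`, `α ≥ 0` and an integer `d ≥ 1`,
`g₁(ν,α,d) = (ν + 1 + (d−1)·α·ν)·exp(−(ν² + (d−1)·α²)/2)` is at most
`((1+√(1+4d))/2)·exp(−(1+2d−√(1+4d))/(4d))`. -/
theorem stmt_16 (ν α : ℝ) (hν : 0 ≤ ν) (hα : 0 ≤ α) (d : ℕ) (hd : 1 ≤ d) :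
    (ν + 1 + ((d : ℝ) - 1) * α * ν) *
        Real.exp (-(ν ^ 2 + ((d : ℝ) - 1) * α ^ 2) / 2) ≤
      ((1 + Real.sqrt (1 + 4 * (d : ℝ))) / 2) *
        Real.exp (-(1 + 2 * (d : ℝ) - Real.sqrt (1 + 4 * (d : ℝ))) / (4 * (d : ℝ))) := by
  rcases eq_or_lt_of_le hd with h1 | h2
  · -- case d = 1
    subst h1
    push_cast
    norm_num
    have h5 : Real.sqrt 5 ^ 2 = 5 := Real.sq_sqrt (by norm_num)
    have h5nn : (0:ℝ) ≤ Real.sqrt 5 := Real.sqrt_nonneg 5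
    have h5ge : (1:ℝ) ≤ Real.sqrt 5 := by nlinarith
    set u : ℝ := (Real.sqrt 5 - 1) / 2 with hu
    have hu0 : 0 ≤ u := by simp [hu]; linarith
    have huu : u ^ 2 + u = 1 := by rw [hu]; linear_combination h5 / 4
    have key1 : ν + 1 = (1 + u) * (1 + u * (ν - u)) := by linear_combination (u - ν) * huu
    have key2 : 1 + u * (ν - u) ≤ Real.exp (u * (ν - u)) := by
      have := Real.add_one_le_exp (u * (ν - u)); linarith
    have key3 : ν + 1 ≤ (1 + u) * Real.exp (u * (ν - u)) := by
      rw [key1]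
      exact mul_le_mul_of_nonneg_left key2 (by linarith)
    have step : (ν + 1) * Real.exp (-ν ^ 2 / 2) ≤
        (1 + u) * Real.exp (u * (ν - u) - ν ^ 2 / 2) := by
      calc (ν + 1) * Real.exp (-ν ^ 2 / 2)
          ≤ (1 + u) * Real.exp (u * (ν - u)) * Real.exp (-ν ^ 2 / 2) :=
            mul_le_mul_of_nonneg_right key3 (Real.exp_pos _).le
        _ = (1 + u) * Real.exp (u * (ν - u) - ν ^ 2 / 2) := by
            rw [mul_assoc, ← Real.exp_add]; ring_nf
    have expo : u * (ν - u) - ν ^ 2 / 2 ≤ -(u ^ 2) / 2 := by nlinarith [sq_nonneg (ν - u)]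
    have final : (1 + u) * Real.exp (u * (ν - u) - ν ^ 2 / 2) ≤
        (1 + u) * Real.exp (-(u ^ 2) / 2) :=
      mul_le_mul_of_nonneg_left (Real.exp_le_exp.mpr expo) (by linarith)
    have e1 : (1 + u) = (1 + Real.sqrt 5) / 2 := by rw [hu]; ring
    have e2 : -(u ^ 2) / 2 = (Real.sqrt 5 - 3) / 4 := by
      have h : u ^ 2 = 1 - u := by linarith
      rw [h, hu]; ring
    calc (ν + 1) * Real.exp (-ν ^ 2 / 2)
        ≤ (1 + u) * Real.exp (-(u ^ 2) / 2) := le_trans step final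
      _ = (1 + Real.sqrt 5) / 2 * Real.exp ((Real.sqrt 5 - 3) / 4) := by
          rw [e1, e2]
  · -- case d ≥ 2
    have hd2 : 2 ≤ d := h2
    have hdR : (2:ℝ) ≤ (d:ℝ) := by exact_mod_cast hd2
    set k : ℝ := (d:ℝ) - 1 with hkdef
    clear_value k
    have hk : 1 ≤ k := by rw [hkdef]; linarith
    have hk0 : 0 ≤ k := by linarith
    set w : ℝ := Real.sqrt (1 + 4 * (d:ℝ)) with hwdef
    clear_value w
    have hwnn : 0 ≤ w := by rw [hwdef]; exact Real.sqrt_nonneg _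
    have hsq : w ^ 2 = 1 + 4 * (d:ℝ) := by
      rw [hwdef]; exact Real.sq_sqrt (by positivity)
    have hw3 : 3 ≤ w := by nlinarith
    set E : ℝ := (1 + 2 * (d:ℝ) - w) / (4 * (d:ℝ)) with hEdef
    clear_value E
    have hRnn : 0 ≤ ((1 + w) / 2) * Real.exp (-E) := by positivity
    have hexpE : (-(1 + 2 * (d:ℝ) - w) / (4 * (d:ℝ))) = -E := by rw [hEdef]; ring
    rw [hexpE]
    -- reduce to squares
    refine le_of_pow_le_pow_left₀ two_ne_zero hRnn ?_
    have hEE : -2 * E = -1 + 2 / (w + 1) := by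
      rw [hEdef]
      have hw1 : w + 1 ≠ 0 := by linarith
      have hdne : (4 : ℝ) * (d:ℝ) ≠ 0 := by positivity
      field_simp
      nlinarith [hsq]
    -- LHS squared bound
    have hA0 : (0:ℝ) ≤ 1 + 2 * ν + (d:ℝ) * ν ^ 2 := by nlinarith
    have cs : (ν + 1 + k * α * ν) ^ 2 ≤
        (1 + 2 * ν + (d:ℝ) * ν ^ 2) * (1 + k * α ^ 2) := by
      have h := mul_nonneg hk0 (sq_nonneg (ν - α * (1 + ν)))
      have hkd : (d:ℝ) = k + 1 := by rw [hkdef]; ring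
      rw [hkd]; nlinarith [h]
    have habs : (1 + k * α ^ 2) * Real.exp (-(k * α ^ 2)) ≤ 1 := by
      have h := Real.add_one_le_exp (k * α ^ 2)
      have hp := (Real.exp_pos (-(k * α ^ 2))).le
      have : (1 + k * α ^ 2) * Real.exp (-(k * α ^ 2)) ≤
          Real.exp (k * α ^ 2) * Real.exp (-(k * α ^ 2)) := by
        apply mul_le_mul_of_nonneg_right _ hp; linarith
      rwa [← Real.exp_add, add_neg_cancel, Real.exp_zero] at this
    have step1 : ((ν + 1 + k * α * ν) * Real.exp (-(ν ^ 2 + k * α ^ 2) / 2)) ^ 2 ≤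
        (1 + 2 * ν + (d:ℝ) * ν ^ 2) * Real.exp (-(ν ^ 2)) := by
      rw [mul_pow, aux_exp_sq]
      have hsplit : Real.exp (2 * (-(ν ^ 2 + k * α ^ 2) / 2)) =
          Real.exp (-(ν ^ 2)) * Real.exp (-(k * α ^ 2)) := by
        rw [← Real.exp_add]; congr 1; ring
      rw [hsplit]
      calc (ν + 1 + k * α * ν) ^ 2 * (Real.exp (-(ν ^ 2)) * Real.exp (-(k * α ^ 2)))
          ≤ ((1 + 2 * ν + (d:ℝ) * ν ^ 2) * (1 + k * α ^ 2)) *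
            (Real.exp (-(ν ^ 2)) * Real.exp (-(k * α ^ 2))) := by
            apply mul_le_mul_of_nonneg_right cs; positivity
        _ = ((1 + 2 * ν + (d:ℝ) * ν ^ 2) * Real.exp (-(ν ^ 2))) *
            ((1 + k * α ^ 2) * Real.exp (-(k * α ^ 2))) := by ring
        _ ≤ ((1 + 2 * ν + (d:ℝ) * ν ^ 2) * Real.exp (-(ν ^ 2))) * 1 := by
            apply mul_le_mul_of_nonneg_left habs; positivity
        _ = (1 + 2 * ν + (d:ℝ) * ν ^ 2) * Real.exp (-(ν ^ 2)) := by ring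
    have step2 : (1 + 2 * ν + (d:ℝ) * ν ^ 2) * Real.exp (-(ν ^ 2)) ≤
        2 * Real.exp (-(1/4)) + (d:ℝ) * Real.exp (-1) := by
      have e1 : ν ^ 2 + 3/4 ≤ Real.exp (ν ^ 2 - 1/4) := by
        have := Real.add_one_le_exp (ν ^ 2 - 1/4); linarith
      have e2 : ν ^ 2 ≤ Real.exp (ν ^ 2 - 1) := by
        have := Real.add_one_le_exp (ν ^ 2 - 1); linarith
      have hbound : 1 + 2 * ν + (d:ℝ) * ν ^ 2 ≤
          2 * Real.exp (ν ^ 2 - 1/4) + (d:ℝ) * Real.exp (ν ^ 2 - 1) := by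
        linarith [sq_nonneg (ν - 1/2), e1,
          mul_le_mul_of_nonneg_left e2 (by linarith : (0:ℝ) ≤ (d:ℝ))]
      calc (1 + 2 * ν + (d:ℝ) * ν ^ 2) * Real.exp (-(ν ^ 2))
          ≤ (2 * Real.exp (ν ^ 2 - 1/4) + (d:ℝ) * Real.exp (ν ^ 2 - 1)) *
            Real.exp (-(ν ^ 2)) := by
            apply mul_le_mul_of_nonneg_right hbound (Real.exp_pos _).le
        _ = 2 * Real.exp (-(1/4)) + (d:ℝ) * Real.exp (-1) := by
            rw [add_mul, mul_assoc, mul_assoc, ← Real.exp_add, ← Real.exp_add,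
              show ν ^ 2 - 1/4 + -(ν ^ 2) = -(1/4 : ℝ) from by ring,
              show ν ^ 2 - 1 + -(ν ^ 2) = -(1 : ℝ) from by ring]
    have step3 : 2 * Real.exp (-(1/4)) + (d:ℝ) * Real.exp (-1) ≤
        Real.exp (-1) * (w + 2) ^ 2 / 4 := by
      have hq : Real.exp (-(1/4)) = Real.exp (3/4) * Real.exp (-1) := by
        rw [← Real.exp_add]; norm_num
      have h34 : Real.exp (3/4) ≤ 17/8 := aux_exp34
      have hdw : (d:ℝ) = (w ^ 2 - 1) / 4 := by linarith
      rw [hq, hdw]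
      have hep := (Real.exp_pos (-1 : ℝ)).le
      have hin : 2 * Real.exp (3/4) + (w ^ 2 - 1) / 4 ≤ (w + 2) ^ 2 / 4 := by
        nlinarith [h34, hw3]
      calc 2 * (Real.exp (3/4) * Real.exp (-1)) + (w ^ 2 - 1) / 4 * Real.exp (-1)
          = (2 * Real.exp (3/4) + (w ^ 2 - 1) / 4) * Real.exp (-1) := by ring
        _ ≤ ((w + 2) ^ 2 / 4) * Real.exp (-1) := mul_le_mul_of_nonneg_right hin hep
        _ = Real.exp (-1) * (w + 2) ^ 2 / 4 := by ring
    have step4 : Real.exp (-1) * (w + 2) ^ 2 / 4 ≤ (((1 + w) / 2) * Real.exp (-E)) ^ 2 := by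
      have hsplit : Real.exp (-E) ^ 2 = Real.exp (-1) * Real.exp (1 / (w + 1)) ^ 2 := by
        rw [aux_exp_sq, aux_exp_sq, ← Real.exp_add]
        congr 1
        have : (2 : ℝ) * -E = -2 * E := by ring
        rw [this, hEE]; ring
      rw [mul_pow, hsplit]
      have hw1 : (0:ℝ) < w + 1 := by linarith
      have he : 1 + 1 / (w + 1) ≤ Real.exp (1 / (w + 1)) := by
        have := Real.add_one_le_exp (1 / (w + 1)); linarith
      have he0 : (0:ℝ) ≤ 1 + 1 / (w + 1) := by positivity
      have hpow : (1 + 1 / (w + 1)) ^ 2 ≤ Real.exp (1 / (w + 1)) ^ 2 :=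
        pow_le_pow_left₀ he0 he 2
      have hkey : ((1 + w) / 2) ^ 2 * (1 + 1 / (w + 1)) ^ 2 = (w + 2) ^ 2 / 4 := by
        rw [← mul_pow]
        have : (1 + w) / 2 * (1 + 1 / (w + 1)) = (w + 2) / 2 := by
          field_simp; ring
        rw [this]; ring
      calc Real.exp (-1) * (w + 2) ^ 2 / 4
          = ((1 + w) / 2) ^ 2 * (1 + 1 / (w + 1)) ^ 2 * Real.exp (-1) := by
            rw [hkey]; ring
        _ ≤ ((1 + w) / 2) ^ 2 * Real.exp (1 / (w + 1)) ^ 2 * Real.exp (-1) := by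
            apply mul_le_mul_of_nonneg_right _ (Real.exp_pos _).le
            apply mul_le_mul_of_nonneg_left hpow (by positivity)
        _ = ((1 + w) / 2) ^ 2 * (Real.exp (-1) * Real.exp (1 / (w + 1)) ^ 2) := by ring
    calc ((ν + 1 + k * α * ν) * Real.exp (-(ν ^ 2 + k * α ^ 2) / 2)) ^ 2
        ≤ (1 + 2 * ν + (d:ℝ) * ν ^ 2) * Real.exp (-(ν ^ 2)) := step1
      _ ≤ 2 * Real.exp (-(1/4)) + (d:ℝ) * Real.exp (-1) := step2
      _ ≤ Real.exp (-1) * (w + 2) ^ 2 / 4 := step3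
      _ ≤ (((1 + w) / 2) * Real.exp (-E)) ^ 2 := step4
end
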